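/- Let u^1,…,u^n denote the coordinate functions on Ω, let f^1,…,f^n be smooth with L_j f^s = λ^j L_j u^s for all j, s, let h be a nonvanishing smooth function and g a smooth function with L_i g = λ^i L_i h for all i. For c ∈ ℝ set φ_c = (g + c)/h and r_c = (φ_c, u^1 φ_c − f^1, …, u^n φ_c − f^n) : Ω → ℝ^{n+1}. Then the tangent directions are independent of c: for all c₁, c₂ ∈ ℝ, every j, and every p ∈ Ω, (φ_{c₂}(p) − λ^j(p))·L_j r_{c₁}(p) = (φ_{c₁}(p) − λ^j(p))·L_j r_{c₂}(p); in fact L_j r_c = (φ_c − λ^j)·(L_j U − (L_j h/h)·U), where U = (1, u^1, …, u^n) and the vector field L_j U − (L_j h/h)·U does not depend on c. -/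

import Mathlib

noncomputable def Lder {n : ℕ} {F : Type*} [NormedAddCommGroup F] [NormedSpace ℝ F]
    (ξ : Fin n → (Fin n → ℝ) → (Fin n → ℝ)) (j : Fin n)
    (w : (Fin n → ℝ) → F) : (Fin n → ℝ) → F :=
  fun p => fderiv ℝ w p (ξ j p)

/-!
Write `φ_c = (g + c)/h`, `U = (1, u)` and `F = (0, f)`, so that `r_c = φ_c • U - F`.
Each `L_j` is a derivation, and the hypotheses say that `L_j F = λ^j L_j U` and
`L_j g = λ^j L_j h`. Hence `L_j r_c = L_j φ_c • U + (φ_c - λ^j) • L_j U`, while the quotient rule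
gives `L_j φ_c = (λ^j - φ_c) L_j h / h`; together these are the factorisation of `L_j r_c`.
-/

section Lder

variable {n : ℕ} {F : Type*} [NormedAddCommGroup F] [NormedSpace ℝ F]
  (ξ : Fin n → (Fin n → ℝ) → (Fin n → ℝ)) (j : Fin n) {p : Fin n → ℝ}

theorem Lder_sub {V W : (Fin n → ℝ) → F} (hV : DifferentiableAt ℝ V p)
    (hW : DifferentiableAt ℝ W p) :
    Lder ξ j (fun q => V q - W q) p = Lder ξ j V p - Lder ξ j W p := by
  simp [Lder, fderiv_fun_sub hV hW]

theorem Lder_smul {a : (Fin n → ℝ) → ℝ} {V : (Fin n → ℝ) → F} (ha : DifferentiableAt ℝ a p)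
    (hV : DifferentiableAt ℝ V p) :
    Lder ξ j (fun q => a q • V q) p = Lder ξ j a p • V p + a p • Lder ξ j V p := by
  simp [Lder, fderiv_fun_smul ha hV, add_comm]

theorem Lder_mul {a b : (Fin n → ℝ) → ℝ} (ha : DifferentiableAt ℝ a p)
    (hb : DifferentiableAt ℝ b p) :
    Lder ξ j (fun q => a q * b q) p = Lder ξ j a p * b p + a p * Lder ξ j b p :=
  Lder_smul ξ j ha hb

theorem Lder_inv {a : (Fin n → ℝ) → ℝ} (ha : DifferentiableAt ℝ a p) (hne : a p ≠ 0) :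
    Lder ξ j (fun q => (a q)⁻¹) p = -Lder ξ j a p / a p ^ 2 := by
  have hinv := (hasFDerivAt_inv hne).comp p ha.hasFDerivAt
  simp only [Lder, Function.comp_def] at hinv ⊢
  rw [hinv.fderiv]
  simp [div_eq_mul_inv, mul_comm]

theorem Lder_div {a b : (Fin n → ℝ) → ℝ} (ha : DifferentiableAt ℝ a p)
    (hb : DifferentiableAt ℝ b p) (hne : b p ≠ 0) :
    Lder ξ j (fun q => a q / b q) p = (Lder ξ j a p * b p - a p * Lder ξ j b p) / b p ^ 2 := by
  simp only [div_eq_mul_inv]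
  rw [Lder_mul ξ j ha (hb.fun_inv hne), Lder_inv ξ j hb hne]
  field_simp
  ring

theorem Lder_add_const (V : (Fin n → ℝ) → F) (c : F) :
    Lder ξ j (fun q => V q + c) p = Lder ξ j V p := by
  simp only [Lder, fderiv_add_const]

theorem Lder_const (c : F) : Lder ξ j (fun _ => c) p = 0 := by
  simp only [Lder, fderiv_const_apply]
  rfl

theorem Lder_pi {ι : Type*} [Fintype ι] {V : ι → (Fin n → ℝ) → ℝ}
    (hV : ∀ i, DifferentiableAt ℝ (V i) p) :
    Lder ξ j (fun q i => V i q) p = fun i => Lder ξ j (V i) p := by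
  simp only [Lder, fderiv_pi hV]
  rfl

theorem Lder_vecCons {m : ℕ} {a : (Fin n → ℝ) → F} {b : (Fin n → ℝ) → Fin m → F}
    (ha : DifferentiableAt ℝ a p) (hb : DifferentiableAt ℝ b p) :
    Lder ξ j (fun q => Matrix.vecCons (a q) (b q)) p
      = Matrix.vecCons (Lder ξ j a p) (Lder ξ j b p) := by
  have hcons := (HasFDerivAt.finCons (F' := fun _ => F) ha.hasFDerivAt hb.hasFDerivAt).fderiv
  exact DFunLike.congr_fun hcons (ξ j p)

end Lder

section ConjugateSurface

variable {n : ℕ} (ξ : Fin n → (Fin n → ℝ) → (Fin n → ℝ)) (j : Fin n) {p : Fin n → ℝ}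
  {h g : (Fin n → ℝ) → ℝ} {lam : ℝ}

theorem Lder_flux_ratio (hg : DifferentiableAt ℝ g p) (hh : DifferentiableAt ℝ h p)
    (hh0 : h p ≠ 0) (hcl : Lder ξ j g p = lam * Lder ξ j h p) (c : ℝ) :
    Lder ξ j (fun q => (g q + c) / h q) p = (lam - (g p + c) / h p) * (Lder ξ j h p / h p) := by
  rw [Lder_div ξ j (hg.add_const c) hh hh0, Lder_add_const, hcl]
  field_simp

theorem Lder_conjugate_surface {f : Fin n → (Fin n → ℝ) → ℝ}
    (hf : ∀ s, DifferentiableAt ℝ (f s) p)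
    (hcons : ∀ s, Lder ξ j (f s) p = lam * Lder ξ j (fun q => q s) p)
    (hg : DifferentiableAt ℝ g p) (hh : DifferentiableAt ℝ h p) (hh0 : h p ≠ 0)
    (hcl : Lder ξ j g p = lam * Lder ξ j h p) (c : ℝ) :
    Lder ξ j (fun q => Matrix.vecCons ((g q + c) / h q)
        (fun s => q s * ((g q + c) / h q) - f s q)) p
      = ((g p + c) / h p - lam) •
          (Lder ξ j (fun q => Matrix.vecCons 1 (fun s => q s)) p
            - (Lder ξ j h p / h p) • Matrix.vecCons 1 (fun s => p s)) := by
  set φ : (Fin n → ℝ) → ℝ := fun q => (g q + c) / h q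
  set U : (Fin n → ℝ) → Fin (n + 1) → ℝ := fun q => Matrix.vecCons 1 (fun s => q s)
  set F : (Fin n → ℝ) → Fin (n + 1) → ℝ := fun q => Matrix.vecCons 0 (fun s => f s q)
  have hφ : DifferentiableAt ℝ φ p := by
    simpa only [φ, div_eq_mul_inv] using (hg.add_const c).fun_mul (hh.fun_inv hh0)
  have hcoord : ∀ s : Fin n, DifferentiableAt ℝ (fun q : Fin n → ℝ => q s) p :=
    fun s => differentiableAt_apply s p
  have hU : DifferentiableAt ℝ U p :=
    (differentiableAt_const 1).finCons (differentiableAt_pi.2 hcoord)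
  have hF : DifferentiableAt ℝ F p :=
    (differentiableAt_const 0).finCons (differentiableAt_pi.2 hf)
  have hsplit : (fun q => Matrix.vecCons (φ q) (fun s => q s * φ q - f s q))
      = fun q => φ q • U q - F q := by
    funext q i
    refine Fin.cases ?_ (fun s => ?_) i <;> simp [U, F, mul_comm]
  have hLF : Lder ξ j F p = lam • Lder ξ j U p := by
    simp only [F, U, Lder_vecCons ξ j (differentiableAt_const _) (differentiableAt_pi.2 hf),
      Lder_vecCons ξ j (differentiableAt_const _) (differentiableAt_pi.2 hcoord),
      Lder_pi ξ j hf, Lder_pi ξ j hcoord, Lder_const, hcons, Matrix.smul_cons, smul_zero]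
    rfl
  rw [hsplit, Lder_sub ξ j (hφ.fun_smul hU) hF, Lder_smul ξ j hφ hU, hLF,
    Lder_flux_ratio ξ j hg hh hh0 hcl]
  module

end ConjugateSurface

theorem stmt3_general {n : ℕ} (Ω : Set (Fin n → ℝ)) (hΩ : IsOpen Ω)
    (ξ : Fin n → (Fin n → ℝ) → (Fin n → ℝ))
    (lam : Fin n → (Fin n → ℝ) → ℝ)
    (f : Fin n → (Fin n → ℝ) → ℝ)
    (hf : ∀ s, ContDiffOn ℝ (⊤ : ℕ∞) (f s) Ω)
    (hcons : ∀ j s, ∀ p ∈ Ω,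
      Lder ξ j (f s) p = lam j p * Lder ξ j (fun q => q s) p)
    (h g : (Fin n → ℝ) → ℝ)
    (hh : ContDiffOn ℝ (⊤ : ℕ∞) h Ω) (hg : ContDiffOn ℝ (⊤ : ℕ∞) g Ω)
    (hh0 : ∀ p ∈ Ω, h p ≠ 0)
    (hcl : ∀ i, ∀ p ∈ Ω, Lder ξ i g p = lam i p * Lder ξ i h p)
    (r : ℝ → (Fin n → ℝ) → (Fin (n + 1) → ℝ))
    (hr : ∀ c : ℝ, r c = fun p =>
      Matrix.vecCons ((g p + c) / h p) (fun s => p s * ((g p + c) / h p) - f s p))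
    (U : (Fin n → ℝ) → (Fin (n + 1) → ℝ))
    (hU : U = fun p => Matrix.vecCons 1 (fun s => p s)) :
    (∀ c₁ c₂ : ℝ, ∀ j, ∀ p ∈ Ω,
        ((g p + c₂) / h p - lam j p) • Lder ξ j (r c₁) p
          = ((g p + c₁) / h p - lam j p) • Lder ξ j (r c₂) p)
      ∧
    (∀ c : ℝ, ∀ j, ∀ p ∈ Ω,
        Lder ξ j (r c) p
          = ((g p + c) / h p - lam j p) •
              (Lder ξ j U p - (Lder ξ j h p / h p) • U p)) := by
  have hdiff : ∀ {w : (Fin n → ℝ) → ℝ}, ContDiffOn ℝ (⊤ : ℕ∞) w Ω →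
      ∀ p ∈ Ω, DifferentiableAt ℝ w p := fun hw p hp =>
    (hw.differentiableOn (by simp)).differentiableAt (hΩ.mem_nhds hp)
  have hfactor : ∀ c : ℝ, ∀ j, ∀ p ∈ Ω, Lder ξ j (r c) p
      = ((g p + c) / h p - lam j p) • (Lder ξ j U p - (Lder ξ j h p / h p) • U p) := by
    intro c j p hp
    subst hU
    rw [hr]
    exact Lder_conjugate_surface ξ j (fun s => hdiff (hf s) p hp) (fun s => hcons j s p hp)
      (hdiff hg p hp) (hdiff hh p hp) (hh0 p hp) (hcl j p hp) c
  refine ⟨fun c₁ c₂ j p hp => ?_, hfactor⟩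
  rw [hfactor c₁ j p hp, hfactor c₂ j p hp, smul_smul, smul_smul, mul_comm]

/-- the family of conjugate hypersurfaces `r_c` obtained by shifting the
flux `g ↦ g + c` is a parallel family: the tangent directions `L_j r_c` are independent
of `c`; in fact `L_j r_c = (φ_c − λ^j)·(L_j U − (L_j h/h)·U)` with `U = (1, u¹, …, uⁿ)`. -/
theorem stmt3 {n : ℕ} (Ω : Set (Fin n → ℝ)) (hΩ : IsOpen Ω)
    (ξ : Fin n → (Fin n → ℝ) → (Fin n → ℝ))
    (hξ : ∀ i, ContDiffOn ℝ (⊤ : ℕ∞) (ξ i) Ω)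
    (hind : ∀ p ∈ Ω, LinearIndependent ℝ (fun i => ξ i p))
    (lam : Fin n → (Fin n → ℝ) → ℝ)
    (hlam : ∀ i, ContDiffOn ℝ (⊤ : ℕ∞) (lam i) Ω)
    (hdist : ∀ i j, i ≠ j → ∀ p ∈ Ω, lam i p ≠ lam j p)
    (f : Fin n → (Fin n → ℝ) → ℝ)
    (hf : ∀ s, ContDiffOn ℝ (⊤ : ℕ∞) (f s) Ω)
    (hcons : ∀ j s, ∀ p ∈ Ω,
      Lder ξ j (f s) p = lam j p * Lder ξ j (fun q => q s) p)
    (h g : (Fin n → ℝ) → ℝ)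
    (hh : ContDiffOn ℝ (⊤ : ℕ∞) h Ω) (hg : ContDiffOn ℝ (⊤ : ℕ∞) g Ω)
    (hh0 : ∀ p ∈ Ω, h p ≠ 0)
    (hcl : ∀ i, ∀ p ∈ Ω, Lder ξ i g p = lam i p * Lder ξ i h p)
    (r : ℝ → (Fin n → ℝ) → (Fin (n + 1) → ℝ))
    (hr : ∀ c : ℝ, r c = fun p =>
      Matrix.vecCons ((g p + c) / h p) (fun s => p s * ((g p + c) / h p) - f s p))
    (U : (Fin n → ℝ) → (Fin (n + 1) → ℝ))
    (hU : U = fun p => Matrix.vecCons 1 (fun s => p s)) :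
    (∀ c₁ c₂ : ℝ, ∀ j, ∀ p ∈ Ω,
        ((g p + c₂) / h p - lam j p) • Lder ξ j (r c₁) p
          = ((g p + c₁) / h p - lam j p) • Lder ξ j (r c₂) p)
      ∧
    (∀ c : ℝ, ∀ j, ∀ p ∈ Ω,
        Lder ξ j (r c) p
          = ((g p + c) / h p - lam j p) •
              (Lder ξ j U p - (Lder ξ j h p / h p) • U p)) :=
  stmt3_general Ω hΩ ξ lam f hf hcons h g hh hg hh0 hcl r hr U hU
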